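/- arXiv:2510.02720 — 2 statements merged into one kernel-verified Lean document; each statement's English description precedes it below -/
import Mathlib

section
/- Let $L_a \in \mathbb{R}$ with $L_a < 0$, let $L_g \in \mathbb{R}^p$ be nonzero, and let $w > 0$, $\gamma > 0$. Define $a^* = \frac{-L_a}{\|L_g\|^2 + \gamma^2/w} L_g$ and $c^* = \frac{-\gamma L_a}{w\|L_g\|^2 + \gamma^2}$. Then $c^* > 0$, the constraint $L_a + \langle L_g, a^*\rangle + \gamma c^* = 0$ is active, and $(a^*, c^*)$ is a global minimizer of: minimize $\tfrac12\|a\|^2 + \tfrac{w}{2}c^2$ subject to $L_a + \langle L_g, a\rangle + \gamma c \geq 0$, $c \geq 0$. -/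
/-!
The objective is a convex quadratic and the constraint affine, so the KKT conditions suffice.
With multiplier `λ = -La / (‖Lg‖² + γ²/w) > 0`, the point `a = λ • Lg`, `c = λ γ / w` is
stationary and makes the constraint active. Then the first-order change of the objective from
`(a, c)` to any feasible `(b, d)` is `λ` times the constraint value at `(b, d)`, hence nonnegative,
and the second-order part `½‖b - a‖² + (w/2)(d - c)²` is nonnegative as well.
-/

open RealInnerProductSpace

theorem half_norm_sq_add_le_of_isKKT {E : Type*} [NormedAddCommGroup E] [InnerProductSpace ℝ E]
    {g a b : E} {r w γ c d lam : ℝ} (hw : 0 ≤ w) (hlam : 0 ≤ lam) (ha : a = lam • g)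
    (hc : w * c = lam * γ) (hactive : r + ⟪g, a⟫ + γ * c = 0) (hb : 0 ≤ r + ⟪g, b⟫ + γ * d) :
    (1/2) * ‖a‖^2 + (w/2) * c^2 ≤ (1/2) * ‖b‖^2 + (w/2) * d^2 := by
  have hexpand : ‖b‖^2 = ‖a‖^2 + 2 * ⟪a, b - a⟫ + ‖b - a‖^2 := by
    simpa using norm_add_sq_real a (b - a)
  have hdiff : (1/2) * ‖b‖^2 + (w/2) * d^2 - ((1/2) * ‖a‖^2 + (w/2) * c^2)
      = (⟪a, b - a⟫ + w * c * (d - c)) + (1/2) * (‖b - a‖^2 + w * (d - c)^2) := by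
    rw [hexpand]
    ring
  have hfirst : ⟪a, b - a⟫ + w * c * (d - c) = lam * (r + ⟪g, b⟫ + γ * d) := by
    have hinner : ⟪a, b - a⟫ = lam * (⟪g, b⟫ - ⟪g, a⟫) := by
      rw [ha, inner_sub_right, real_inner_smul_left, real_inner_smul_left, mul_sub]
    linear_combination hinner + (d - c) * hc - lam * hactive
  have hsecond : 0 ≤ ‖b - a‖^2 + w * (d - c)^2 := by positivity
  linarith [mul_nonneg hlam hb]

theorem stmt_1_general {p : ℕ} (Lg : EuclideanSpace ℝ (Fin p))
    (La w γ : ℝ) (hw : 0 < w) (hγ : 0 < γ) (hLa : La < 0) :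
    let a : EuclideanSpace ℝ (Fin p) := (-La / (‖Lg‖^2 + γ^2 / w)) • Lg
    let c : ℝ := -γ * La / (w * ‖Lg‖^2 + γ^2)
    c > 0 ∧
    La + (inner ℝ Lg a : ℝ) + γ * c = 0 ∧
    (∀ (b : EuclideanSpace ℝ (Fin p)) (d : ℝ),
      La + (inner ℝ Lg b : ℝ) + γ * d ≥ 0 → d ≥ 0 →
      (1/2) * ‖a‖^2 + (w/2) * c^2 ≤ (1/2) * ‖b‖^2 + (w/2) * d^2) := by
  intro a c
  set lam := -La / (‖Lg‖^2 + γ^2 / w) with hlam_def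
  have hlam : 0 < lam := div_pos (by linarith) (by positivity)
  have hc : 0 < c := div_pos (by nlinarith) (by positivity)
  have hwc : w * c = lam * γ := by
    simp only [c, hlam_def]
    field_simp
  have hactive : La + ⟪Lg, a⟫ + γ * c = 0 := by
    simp only [a, c, real_inner_smul_right, real_inner_self_eq_norm_sq]
    field_simp
    ring
  exact ⟨hc, hactive, fun b d hb _ => half_norm_sq_add_le_of_isKKT hw.le hlam.le rfl hwc hactive hb⟩

/-- Closed-form solution of the CBF-QP in the relaxed branch `La < 0`. -/
theorem stmt_1 {p : ℕ} (Lg : EuclideanSpace ℝ (Fin p)) (hLg : Lg ≠ 0)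
    (La w γ : ℝ) (hw : 0 < w) (hγ : 0 < γ) (hLa : La < 0) :
    let a : EuclideanSpace ℝ (Fin p) := (-La / (‖Lg‖^2 + γ^2 / w)) • Lg
    let c : ℝ := -γ * La / (w * ‖Lg‖^2 + γ^2)
    c > 0 ∧
    La + (inner ℝ Lg a : ℝ) + γ * c = 0 ∧
    (∀ (b : EuclideanSpace ℝ (Fin p)) (d : ℝ),
      La + (inner ℝ Lg b : ℝ) + γ * d ≥ 0 → d ≥ 0 →
      (1/2) * ‖a‖^2 + (w/2) * c^2 ≤ (1/2) * ‖b‖^2 + (w/2) * d^2) :=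
  stmt_1_general Lg La w γ hw hγ hLa
end

section
/- In the setting of the KKT system for the CBF-QP with $L_g \neq 0$, $w > 0$, $\gamma > 0$: if $L_a \geq 0$, then the only KKT point has $\lambda_1 = 0$, $a^* = 0$, $c^* = 0$. Conversely, if $L_a < 0$, then every KKT point has $\lambda_1 > 0$ and the CBF constraint is active: $L_a + \langle L_g, a^*\rangle + \gamma c^* = 0$. -/
/-!
Stationarity in `c` multiplied by `c`, together with complementary slackness `λ₂ c = 0`, gives
`w c² = λ₁ γ c`. Hence `λ₁ = 0` forces `c = 0` and `a = λ₁ L_g = 0`, a point that is feasible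
only when `L_a ≥ 0`. If instead `λ₁ > 0`, the CBF constraint is active and `γ c ≥ 0`, so
`L_a = -λ₁ ‖L_g‖² - γ c < 0`.
-/

section CbfKKT

variable {E : Type*} [NormedAddCommGroup E] [InnerProductSpace ℝ E]
  {Lg a : E} {La w γ c lam1 lam2 : ℝ}

lemma kkt_mul_sq_eq (hstat2 : w * c = lam1 * γ + lam2) (hcomp2 : lam2 * c = 0) :
    w * c ^ 2 = lam1 * (γ * c) := by
  linear_combination c * hstat2 + hcomp2

lemma kkt_eq_zero_of_lam1_eq_zero (hw : 0 < w) (hstat1 : a = lam1 • Lg)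
    (hstat2 : w * c = lam1 * γ + lam2) (hcomp2 : lam2 * c = 0) (h : lam1 = 0) :
    a = 0 ∧ c = 0 := by
  have hwc : w * c ^ 2 = 0 := by rw [kkt_mul_sq_eq hstat2 hcomp2, h, zero_mul]
  exact ⟨by rw [hstat1, h, zero_smul],
    (pow_eq_zero_iff two_ne_zero).mp ((mul_eq_zero.mp hwc).resolve_left hw.ne')⟩

lemma kkt_lam1_eq_zero_of_nonneg (hLg : Lg ≠ 0) (hw : 0 < w) (hstat1 : a = lam1 • Lg)
    (hstat2 : w * c = lam1 * γ + lam2) (hcomp1 : lam1 * (La + inner ℝ Lg a + γ * c) = 0)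
    (hcomp2 : lam2 * c = 0) (hlam1 : 0 ≤ lam1) (hLa : 0 ≤ La) : lam1 = 0 := by
  by_contra hne
  have hpos : 0 < lam1 := lt_of_le_of_ne hlam1 (Ne.symm hne)
  have hactive : La + inner ℝ Lg a + γ * c = 0 := (mul_eq_zero.mp hcomp1).resolve_left hne
  have hinner : inner ℝ Lg a = lam1 * ‖Lg‖ ^ 2 := by
    rw [hstat1, inner_smul_right, real_inner_self_eq_norm_sq]
  have hγc : 0 ≤ γ * c :=
    nonneg_of_mul_nonneg_right (kkt_mul_sq_eq hstat2 hcomp2 ▸ by positivity) hpos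
  have hLg2 : 0 < lam1 * ‖Lg‖ ^ 2 := by have := norm_pos_iff.mpr hLg; positivity
  linarith

lemma kkt_active_of_neg (hw : 0 < w) (hstat1 : a = lam1 • Lg)
    (hstat2 : w * c = lam1 * γ + lam2) (hcomp1 : lam1 * (La + inner ℝ Lg a + γ * c) = 0)
    (hcomp2 : lam2 * c = 0) (hlam1 : 0 ≤ lam1) (hfeas1 : La + inner ℝ Lg a + γ * c ≥ 0)
    (hLa : La < 0) : lam1 > 0 ∧ La + inner ℝ Lg a + γ * c = 0 := by
  have hne : lam1 ≠ 0 := by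
    intro h
    obtain ⟨rfl, rfl⟩ := kkt_eq_zero_of_lam1_eq_zero hw hstat1 hstat2 hcomp2 h
    simp only [inner_zero_right, mul_zero, add_zero] at hfeas1
    linarith
  exact ⟨lt_of_le_of_ne hlam1 (Ne.symm hne), (mul_eq_zero.mp hcomp1).resolve_left hne⟩

end CbfKKT

theorem stmt_10_general {p : ℕ} (Lg : EuclideanSpace ℝ (Fin p)) (hLg : Lg ≠ 0)
    (La w γ : ℝ) (hw : 0 < w)
    (a : EuclideanSpace ℝ (Fin p)) (c lam1 lam2 : ℝ)
    (hstat1 : a = lam1 • Lg)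
    (hstat2 : w * c = lam1 * γ + lam2)
    (hcomp1 : lam1 * (La + (inner ℝ Lg a : ℝ) + γ * c) = 0)
    (hcomp2 : lam2 * c = 0)
    (hlam1 : 0 ≤ lam1)
    (hfeas1 : La + (inner ℝ Lg a : ℝ) + γ * c ≥ 0) :
    (0 ≤ La → lam1 = 0 ∧ a = 0 ∧ c = 0) ∧
    (La < 0 → lam1 > 0 ∧ La + (inner ℝ Lg a : ℝ) + γ * c = 0) := by
  refine ⟨fun hLa => ?_, kkt_active_of_neg hw hstat1 hstat2 hcomp1 hcomp2 hlam1 hfeas1⟩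
  have h0 := kkt_lam1_eq_zero_of_nonneg hLg hw hstat1 hstat2 hcomp1 hcomp2 hlam1 hLa
  exact ⟨h0, kkt_eq_zero_of_lam1_eq_zero hw hstat1 hstat2 hcomp2 h0⟩

/-- dichotomy of KKT points of the CBF-QP according to the sign of `La`. -/
theorem stmt_10 {p : ℕ} (Lg : EuclideanSpace ℝ (Fin p)) (hLg : Lg ≠ 0)
    (La w γ : ℝ) (hw : 0 < w) (hγ : 0 < γ)
    (a : EuclideanSpace ℝ (Fin p)) (c lam1 lam2 : ℝ)
    (hstat1 : a = lam1 • Lg)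
    (hstat2 : w * c = lam1 * γ + lam2)
    (hcomp1 : lam1 * (La + (inner ℝ Lg a : ℝ) + γ * c) = 0)
    (hcomp2 : lam2 * c = 0)
    (hlam1 : 0 ≤ lam1) (hlam2 : 0 ≤ lam2)
    (hfeas1 : La + (inner ℝ Lg a : ℝ) + γ * c ≥ 0) (hfeas2 : c ≥ 0) :
    (0 ≤ La → lam1 = 0 ∧ a = 0 ∧ c = 0) ∧
    (La < 0 → lam1 > 0 ∧ La + (inner ℝ Lg a : ℝ) + γ * c = 0) :=
  stmt_10_general Lg hLg La w γ hw a c lam1 lam2 hstat1 hstat2 hcomp1 hcomp2 hlam1 hfeas1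
end
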